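/- Every character χ ∈ X can be expressed uniquely as a product χ = ∏_{n=-∞}^{+∞} r_n^{α_n} with exponents α_n ∈ {0, 1, …, p−1}, in which only finitely many factors with positive index n have nonzero exponent; i.e. there is a unique sequence (α_n)_{n∈ℤ} with α_n ∈ {0,…,p−1}, α_n = 0 for all but finitely many n > 0, such that χ(x) = ∏_n r_n(x)^{α_n} for all x ∈ K. -/

import Mathlib

/-!
Common setup: the local field `K = F^(s)` of positive characteristic `p`, realized as the
field of formal Laurent series over `GF(p^s)`, its balls, characters, Rademacher functions,
Haar measures, Riesz systems and multiresolution analysis, following Berdnikov–Lukomskii,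
"Discrete Riesz MRA on local fields of positive characteristic".
-/

open MeasureTheory Filter Topology Complex
open scoped BigOperators

noncomputable section

namespace LocalFieldMRA

variable (p s : ℕ) [Fact p.Prime]

/-- The finite field `GF(p^s)`. -/
abbrev GF := GaloisField p s

/-- The local field `K = F^(s)` of positive characteristic `p`: formal Laurent series
over `GF(p^s)`. -/
abbrev K := LaurentSeries (GF p s)

/-- The ball `K_n = {a : ‖a‖ ≤ p^{-sn}}`: all Laurent series with coefficients vanishing
below index `n`. -/
def ball (n : ℤ) : Set (K p s) := {a | ∀ m : ℤ, m < n → a.coeff m = 0}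

/-- The norm `‖a‖ = p^{-s n}` where `n` is the least index with nonzero coefficient. -/
def normK (a : K p s) : ℝ :=
  @ite _ (a = 0) (Classical.dec _) 0 ((p : ℝ) ^ (-(s : ℤ) * a.order))

/-- The basis element `g_n = x^n` of `K`. -/
def gElt (n : ℤ) : K p s := HahnSeries.single n (1 : GF p s)

/-- The `n`-th power `𝒜ⁿ` of the dilation operator: `∑ λ_k g_k ↦ ∑ λ_k g_{k-n}`,
i.e. multiplication by `x^{-n}`. -/
def dilPow (n : ℤ) (a : K p s) : K p s := HahnSeries.single (-n) (1 : GF p s) * a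

/-- The dilation operator `𝒜 : ∑ λ_n g_n ↦ ∑ λ_n g_{n-1}`. -/
def dil : K p s → K p s := dilPow p s 1

/-- `𝒜ⁿ` as an additive homomorphism. -/
def dilHom (n : ℤ) : K p s →+ K p s :=
  AddMonoidHom.mulLeft (HahnSeries.single (-n) (1 : GF p s))

/-- The set `H_0 = {a_{-1}g_{-1} ∔ … ∔ a_{-ν}g_{-ν}}`: the analogue of ℕ₀ (shift set). -/
def H0 : Set (K p s) := {a | ∀ m : ℤ, 0 ≤ m → a.coeff m = 0}

/-- The character group `X` of `K⁺`: additive characters with values in the circle. -/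
abbrev X := AddChar (K p s) Circle

/-- The annihilator `(K_n⁺)^⊥ = {χ : χ(x) = 1 on K_n}`. -/
def ann (n : ℤ) : Set (X p s) := {χ | ∀ x ∈ ball p s n, χ x = 1}

/-- A character of `K⁺` is continuous iff it is trivial on some ball `K_n`
(the circle has no small subgroups). -/
def ContinuousChar (χ : X p s) : Prop := ∃ n : ℤ, χ ∈ ann p s n

/-- The coset `S·ξ` of a set of characters. -/
def coset (S : Set (X p s)) (ξ : X p s) : Set (X p s) := (· * ξ) '' S

/-- The dilation on characters: `(χ𝒜ⁿ)(x) = χ(𝒜ⁿ x)`. -/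
def chDil (n : ℤ) (χ : X p s) : X p s := χ.compAddMonoidHom (dilHom p s n)

variable (bas : Module.Basis (Fin s) (ZMod p) (GF p s))

/-- The `l`-th `GF(p)`-coordinate of the `k`-th coefficient, as an additive homomorphism
`K →+ ZMod p` (w.r.t. the chosen basis `bas` of `GF(p^s)` over `GF(p)`). -/
def coordHom (k : ℤ) (l : Fin s) : K p s →+ ZMod p where
  toFun a := bas.repr (a.coeff k) l
  map_zero' := by simp
  map_add' a b := by simp [HahnSeries.coeff_add]

/-- The Rademacher function `r_{ks+l}(a) = exp(2πi a_k^{(l)} / p)` as a character of `K⁺`. -/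
def rad (k : ℤ) (l : Fin s) : X p s :=
  (ZMod.toCircle).compAddMonoidHom (coordHom p s bas k l)

/-- The Rademacher function `r_n` for `n ∈ ℤ`, `n = ks + l`, `0 ≤ l < s`. -/
def radZ (n : ℤ) : X p s :=
  if h : 0 < s then
    rad p s bas (n / (s : ℤ)) ⟨(n % (s : ℤ)).toNat, by
      have h0 : (0:ℤ) < (s:ℤ) := by exact_mod_cast h
      have h1 := Int.emod_nonneg n (by omega : (s:ℤ) ≠ 0)
      have h2 := Int.emod_lt_of_pos n h0
      omega⟩
  else 1

/-- The block Rademacher power `𝐫_k^{𝐛} = ∏_{l<s} r_{ks+l}^{b^{(l)}}` for `𝐛 ∈ GF(p^s)`. -/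
def radPow (k : ℤ) (b : GF p s) : X p s :=
  ∏ l : Fin s, (rad p s bas k l) ^ (bas.repr b l).val

/-- `E ⊂ X` is an `(N,M)`-elementary set: a disjoint union of `p^{Ns}` cosets
`(K_{-N}⁺)^⊥ ξ_j η_j` with `ξ_j` products of Rademacher powers with indices `-N,…,-1`,
`η_j` with indices `0,…,M-1`, such that the `(K_{-N}⁺)^⊥ ξ_j` partition `(K_0⁺)^⊥`,
`ξ_0 = 1`, and every layer `(K_{-N+l+1}⁺)^⊥ \ (K_{-N+l}⁺)^⊥`, `l = 0,…,M+N-1`, meets `E`. -/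
def IsElementary (N M : ℕ) (E : Set (X p s)) : Prop :=
  ∃ ξ η : Fin (p ^ (N * s)) → X p s,
    (∀ j, ∃ a : Fin N → GF p s,
        ξ j = ∏ i : Fin N, radPow p s bas (-((i : ℕ) : ℤ) - 1) (a i)) ∧
    (∀ j, ∃ b : Fin M → GF p s,
        η j = ∏ i : Fin M, radPow p s bas ((i : ℕ) : ℤ) (b i)) ∧
    ξ 0 = 1 ∧
    (∀ j k, j ≠ k →
        Disjoint (coset p s (ann p s (-(N : ℤ))) (ξ j)) (coset p s (ann p s (-(N : ℤ))) (ξ k))) ∧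
    (⋃ j, coset p s (ann p s (-(N : ℤ))) (ξ j)) = ann p s 0 ∧
    (∀ j k, j ≠ k →
        Disjoint (coset p s (ann p s (-(N : ℤ))) (ξ j * η j))
          (coset p s (ann p s (-(N : ℤ))) (ξ k * η k))) ∧
    E = (⋃ j, coset p s (ann p s (-(N : ℤ))) (ξ j * η j)) ∧
    (∀ l : ℕ, l < M + N →
        ((ann p s (-(N : ℤ) + l + 1) \ ann p s (-(N : ℤ) + l)) ∩ E).Nonempty)

instance : MeasurableSpace (K p s) := ⊤
instance : MeasurableSpace (X p s) := ⊤

/-- `μ` is the Haar measure of `K⁺`, normalized by `μ(K_0) = 1`. -/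
def IsHaarK (μ : Measure (K p s)) : Prop :=
  (∀ a : K p s, Measure.map (a + ·) μ = μ) ∧ μ (ball p s 0) = 1

/-- `ν` is the Haar measure of the character group `X`, normalized by `ν((K_0⁺)^⊥) = 1`. -/
def IsHaarX (ν : Measure (X p s)) : Prop :=
  (∀ ρ : X p s, Measure.map (ρ * ·) ν = ν) ∧ ν (ann p s 0) = 1

/-- `φhat` is the Fourier transform of `φ`: `φ̂(χ) = ∫_K φ(x) conj((χ,x)) dμ(x)`. -/
def IsFourierTransform (μ : Measure (K p s)) (φ : K p s → ℂ) (φhat : X p s → ℂ) : Prop :=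
  ∀ χ : X p s, φhat χ = ∫ x, φ x * (starRingEnd ℂ) ((χ x : ℂ)) ∂μ

/-- Continuity of a function on the character group at the trivial character `χ = 1`:
the annihilators `(K_n⁺)^⊥`, `n ∈ ℤ`, form a basis of neighborhoods of `1` in `X`. -/
def ContinuousAtOne (F : X p s → ℂ) : Prop :=
  ∀ ε : ℝ, 0 < ε → ∃ n : ℤ, ∀ χ ∈ ann p s n, ‖F χ - F 1‖ < ε

/-- The family `(f_i)` in `L²(K,μ)` is a Riesz system with constants `A, B > 0`: for every
`(c_i) ∈ ℓ²` the series `∑ c_i f_i` converges in `L²(K)` to some `g` and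
`A‖c‖² ≤ ‖g‖² ≤ B‖c‖²`. -/
def IsRieszSystem (μ : Measure (K p s)) {ι : Type*} (f : ι → K p s → ℂ) (A B : ℝ) : Prop :=
  (∀ i, MemLp (f i) 2 μ) ∧
  ∀ c : ι → ℂ, Summable (fun i => ‖c i‖ ^ 2) →
    ∃ g : K p s → ℂ, MemLp g 2 μ ∧
      Tendsto (fun t : Finset ι => ∫ x, ‖(∑ i ∈ t, c i * f i x) - g x‖ ^ 2 ∂μ)
        atTop (𝓝 0) ∧
      A * ∑' i, ‖c i‖ ^ 2 ≤ ∫ x, ‖g x‖ ^ 2 ∂μ ∧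
      ∫ x, ‖g x‖ ^ 2 ∂μ ≤ B * ∑' i, ‖c i‖ ^ 2

/-- The shift `φ(· ∸ h)`. -/
def shift (φ : K p s → ℂ) (h : K p s) : K p s → ℂ := fun x => φ (x - h)

/-- The dilated shift `φ(𝒜ⁿ · ∸ h)`. -/
def dilShift (φ : K p s → ℂ) (n : ℤ) (h : K p s) : K p s → ℂ :=
  fun x => φ (dilPow p s n x - h)

/-- The normalization factor `p^{ns/2}`. -/
def dscale (n : ℤ) : ℝ := Real.sqrt ((p : ℝ) ^ s) ^ n

/-- The normalized dilated shift `p^{ns/2} φ(𝒜ⁿ · ∸ h)`. -/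
def wave (φ : K p s → ℂ) (n : ℤ) (h : K p s) : K p s → ℂ :=
  fun x => (dscale p s n : ℂ) * φ (dilPow p s n x - h)

/-- The space `V_n(φ)`: the `L²(K)`-closure of `span{φ(𝒜ⁿ x ∸ h) : h ∈ H_0}`. -/
def Vsp (μ : Measure (K p s)) (φ : K p s → ℂ) (n : ℤ) : Set (Lp ℂ 2 μ) :=
  closure (Submodule.span ℂ
    {f : Lp ℂ 2 μ | ∃ h ∈ H0 p s, ⇑f =ᵐ[μ] dilShift p s φ n h} : Set (Lp ℂ 2 μ))

/-- `φ` satisfies the refinement equation `φ(x) = ∑_{h ∈ H_0} β_h φ(𝒜x ∸ h)` with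
`∑ |β_h|² < ∞`, the series converging in `L²(K)`. -/
def SatisfiesRefinement (μ : Measure (K p s)) (φ : K p s → ℂ) : Prop :=
  ∃ β : ↥(H0 p s) → ℂ, Summable (fun h => ‖β h‖ ^ 2) ∧
    Tendsto (fun t : Finset ↥(H0 p s) =>
        ∫ x, ‖(∑ h ∈ t, β h * φ (dil p s x - (h : K p s))) - φ x‖ ^ 2 ∂μ)
      atTop (𝓝 0)

/-- The family `(V n)` of subsets of `L²(K,μ)` is a Riesz multiresolution analysis:
(A1) `V_n ⊆ V_{n+1}`; (A2) `⋃ V_n` dense and `⋂ V_n = {0}`;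
(A3) `f(x) ∈ V_n ↔ f(𝒜x) ∈ V_{n+1}`; (A4) `V_0` invariant under `H_0`-shifts;
(A5) some `φ` whose `H_0`-shifts form a Riesz basis of `V_0`. -/
def IsRieszMRA (μ : Measure (K p s)) (V : ℤ → Set (Lp ℂ 2 μ)) : Prop :=
  (∀ n, V n ⊆ V (n + 1)) ∧
  closure (⋃ n : ℤ, V n) = Set.univ ∧
  (⋂ n : ℤ, V n) = {0} ∧
  (∀ n : ℤ, ∀ f g : K p s → ℂ, ∀ hf : MemLp f 2 μ, ∀ hg : MemLp g 2 μ,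
    (∀ x, g x = f (dil p s x)) → (hf.toLp f ∈ V n ↔ hg.toLp g ∈ V (n + 1))) ∧
  (∀ h ∈ H0 p s, ∀ f g : K p s → ℂ, ∀ hf : MemLp f 2 μ, ∀ hg : MemLp g 2 μ,
    (∀ x, g x = f (x - h)) → hf.toLp f ∈ V 0 → hg.toLp g ∈ V 0) ∧
  (∃ φ : K p s → ℂ, ∃ _ : MemLp φ 2 μ, ∃ A B : ℝ, 0 < A ∧ A ≤ B ∧
    IsRieszSystem p s μ (fun h : ↥(H0 p s) => shift p s φ (h : K p s)) A B ∧
    V 0 = closure (Submodule.span ℂ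
      {f : Lp ℂ 2 μ | ∃ h ∈ H0 p s, ⇑f =ᵐ[μ] shift p s φ h} : Set (Lp ℂ 2 μ)))

/-- An `N`-valid tree on the node alphabet `GF(p^s)`: a directed tree, encoded by its set of
root-paths (nonempty, prefix-closed lists of labels), with root `0`, all nodes at levels
`0,…,N-1` equal to `0`, and every sequence of `N` labels occurring exactly once as a
downward path of `N` consecutive nodes. -/
structure NValidTree (N : ℕ) where
  paths : Set (List (GF p s))
  ne_nil : ∀ l ∈ paths, l ≠ []
  prefix_closed : ∀ l ∈ paths, ∀ l' : List (GF p s), l' <+: l → l' ≠ [] → l' ∈ paths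
  root_mem : [0] ∈ paths
  start_zero : ∀ l ∈ paths, ∀ i : ℕ, i < N → l.getD i 0 = 0
  valid : ∀ w : List (GF p s), w.length = N → ∃! l, l ∈ paths ∧ w <:+ l

/-- The tree `T` has height `H` (the length of its longest path from the root). -/
def NValidTree.heightIs {N : ℕ} (T : NValidTree p s N) (H : ℕ) : Prop :=
  (∀ l ∈ T.paths, l.length ≤ H + 1) ∧ ∃ l ∈ T.paths, l.length = H + 1

/-- A generating path of `T`: a root-path of length `≥ N` (hence with `≥ 2N+1` nodes,
labelled `0,…,0,ᾱ_ν,…,ᾱ_{-N}`), beginning with `N` zeros followed by a nonzero label. -/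
def NValidTree.IsGenPath {N : ℕ} (T : NValidTree p s N) (L : List (GF p s)) : Prop :=
  L ∈ T.paths ∧ 2 * N + 1 ≤ L.length ∧ (∀ i : ℕ, i < N → L.getD i 0 = 0) ∧ L.getD N 0 ≠ 0

/-- The character `𝐫_{-N}^{ᾱ_k} 𝐫_{-N+1}^{ᾱ_{k+1}} ⋯ 𝐫_0^{ᾱ_{k+N}}` associated to the window
of `N+1` consecutive labels of the path `L` ending `j` steps below the `N`-th node. -/
def pathChar (N : ℕ) (L : List (GF p s)) (j : ℕ) : X p s :=
  ∏ i : Fin (N + 1), radPow p s bas (-(N : ℤ) + ((i : ℕ) : ℤ)) (L.getD (j + N - (i : ℕ)) 0)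

/-- The set `Ẽ ⊂ X` associated to a path `L` of an `N`-valid tree: the union of the cosets
`(K_{-N}⁺)^⊥ 𝐫_{-N}^{ᾱ_k} ⋯ 𝐫_{-1}^{ᾱ_{k+N-1}} 𝐫_0^{ᾱ_{k+N}}`, `k = -N, …, ν`. -/
def Etilde (N : ℕ) (L : List (GF p s)) : Set (X p s) :=
  ⋃ j ∈ Finset.range (L.length - N), coset p s (ann p s (-(N : ℤ))) (pathChar p s bas N L j)

/-- The periodic extension `S_X = ⋃_{ν'≥1} ⋃_{ᾱ_1,…,ᾱ_{ν'}} S·𝐫_1^{ᾱ_1}⋯𝐫_{ν'}^{ᾱ_{ν'}}`. -/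
def perExt (S : Set (X p s)) : Set (X p s) :=
  ⋃ (m : ℕ) (a : Fin m → GF p s),
    (fun χ => χ * ∏ i : Fin m, radPow p s bas (((i : ℕ) : ℤ) + 1) (a i)) '' S

/-- The periodic extension `Ẽ_X` of `Ẽ`. -/
def EtildeX (N : ℕ) (L : List (GF p s)) : Set (X p s) :=
  perExt p s bas (Etilde p s bas N L)

/-- The set `E = ⋂_{n≥0} Ẽ_X 𝒜ⁿ` generated by the tree (via the chosen path `L`). -/
def genSet (N : ℕ) (L : List (GF p s)) : Set (X p s) :=
  ⋂ n : ℕ, (chDil p s (n : ℤ)) '' (EtildeX p s bas N L)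

/-- `m0` is a mask produced by the RF-algorithm: `m_0 = 1` on `(K_{-N}⁺)^⊥`,
`supp m_0 = Ẽ_X`, `m_0` periodic with all periods `𝐫_1^{ᾱ_1}⋯𝐫_ν^{ᾱ_ν}`, and
`A ≤ |m_0|² ≤ B` on `Ẽ_X`. -/
def IsRFMask (N : ℕ) (L : List (GF p s)) (m0 : X p s → ℂ) (A B : ℝ) : Prop :=
  (∀ χ ∈ ann p s (-(N : ℤ)), m0 χ = 1) ∧
  {χ | m0 χ ≠ 0} = EtildeX p s bas N L ∧
  (∀ χ : X p s, ∀ m : ℕ, ∀ a : Fin m → GF p s,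
      m0 (χ * ∏ i : Fin m, radPow p s bas (((i : ℕ) : ℤ) + 1) (a i)) = m0 χ) ∧
  (∀ χ ∈ EtildeX p s bas N L, A ≤ ‖m0 χ‖ ^ 2 ∧ ‖m0 χ‖ ^ 2 ≤ B)

/-- The dual mask `m̃_0(χ) = 1/m_0(χ)` on `supp m_0`, `0` elsewhere. -/
def mTilde (m0 : X p s → ℂ) : X p s → ℂ := fun χ => if m0 χ = 0 then 0 else (m0 χ)⁻¹

/-- The translated mask `m_𝐥(χ) = m_0(χ 𝐫_0^{-𝐥})`. -/
def mShift (m0 : X p s → ℂ) (l : GF p s) : X p s → ℂ :=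
  fun χ => m0 (χ * (radPow p s bas 0 l)⁻¹)



section Statement1Aux

private lemma exists_toCircle_eq (z : Circle) (hz : z ^ p = 1) :
    ∃ c : ZMod p, ZMod.toCircle c = z := by
  have hp : p ≠ 0 := (Fact.out : p.Prime).ne_zero
  have hz' : (z : ℂ) ^ p = 1 := by
    have := congrArg Circle.coeHom hz
    rw [map_pow, map_one] at this
    exact this
  obtain ⟨i, hip, hi⟩ := (Complex.isPrimitiveRoot_exp p hp).eq_pow_of_pow_eq_one hz'
  refine ⟨(i : ZMod p), ?_⟩
  ext
  rw [ZMod.toCircle_natCast, ← hi, ← Complex.exp_nat_mul]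
  ring_nf

private lemma char_pow_p (χ : X p s) (y : K p s) : χ y ^ p = 1 := by
  rw [← AddChar.map_nsmul_eq_pow]
  have h : (p : ℕ) • y = 0 := by
    rw [← Nat.cast_smul_eq_nsmul (GF p s), CharP.cast_eq_zero, zero_smul]
  rw [h, AddChar.map_zero_eq_one]

private noncomputable def coefFun (χ : X p s) (k : ℤ) (a : GF p s) : ZMod p :=
  Classical.choose (exists_toCircle_eq p (χ (HahnSeries.single k a)) (char_pow_p p s χ _))

private lemma coefFun_spec (χ : X p s) (k : ℤ) (a : GF p s) :
    ZMod.toCircle (coefFun p s χ k a) = χ (HahnSeries.single k a) :=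
  Classical.choose_spec (exists_toCircle_eq p (χ (HahnSeries.single k a)) (char_pow_p p s χ _))

private lemma single_add' (k : ℤ) (a b : GF p s) :
    HahnSeries.single k (a + b) = (HahnSeries.single k a + HahnSeries.single k b : K p s) :=
  map_add (HahnSeries.single.addMonoidHom k) a b

private noncomputable def coefHom (χ : X p s) (k : ℤ) : GF p s →+ ZMod p where
  toFun := coefFun p s χ k
  map_zero' := ZMod.injective_toCircle <| by
    rw [coefFun_spec p s χ k 0, HahnSeries.single_eq_zero]
    simp [AddChar.map_zero_eq_one]
  map_add' a b := ZMod.injective_toCircle <| by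
    rw [AddChar.map_add_eq_mul, coefFun_spec p s χ k a, coefFun_spec p s χ k b,
      coefFun_spec p s χ k (a + b), single_add' p s k a b, AddChar.map_add_eq_mul]

private lemma coefHom_smul (χ : X p s) (k : ℤ) (r : ZMod p) (b : GF p s) :
    coefHom p s χ k (r • b) = r * coefHom p s χ k b := by
  have h : r • b = (r.val : ℕ) • b := by
    rw [← Nat.cast_smul_eq_nsmul (ZMod p) r.val b, ZMod.natCast_rightInverse r]
  rw [h, map_nsmul, nsmul_eq_mul]
  congr 1
  exact ZMod.natCast_rightInverse r

private lemma coefHom_eq_sum (χ : X p s) (k : ℤ) (a : GF p s) :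
    coefHom p s χ k a = ∑ l : Fin s, bas.repr a l * coefHom p s χ k (bas l) := by
  conv_lhs => rw [← bas.sum_repr a]
  rw [map_sum]
  exact Finset.sum_congr rfl fun l _ => coefHom_smul p s χ k _ _

private lemma addChar_sum {A M : Type*} [AddCommMonoid A] [CommMonoid M] (ψ : AddChar A M)
    {ι : Type*} (t : Finset ι) (g : ι → A) : ψ (∑ i ∈ t, g i) = ∏ i ∈ t, ψ (g i) := by
  classical
  induction t using Finset.induction_on with
  | empty => simp
  | insert _ _ h ih => rw [Finset.sum_insert h, AddChar.map_add_eq_mul, ih, Finset.prod_insert h]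

private lemma blockDiv (hs : 0 < s) (k : ℤ) (l : Fin s) :
    (k * (s : ℤ) + (l : ℤ)) / (s : ℤ) = k ∧ (k * (s : ℤ) + (l : ℤ)) % (s : ℤ) = (l : ℤ) := by
  have hs' : (0 : ℤ) < (s : ℤ) := by exact_mod_cast hs
  have hl0 : (0 : ℤ) ≤ (l : ℤ) := Int.ofNat_nonneg _
  have hls : ((l : ℕ) : ℤ) < (s : ℤ) := by exact_mod_cast l.isLt
  constructor
  · rw [add_comm, Int.add_mul_ediv_right _ _ hs'.ne', Int.ediv_eq_zero_of_lt hl0 hls, zero_add]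
  · rw [add_comm, Int.add_mul_emod_self_right, Int.emod_eq_of_lt hl0 hls]

private lemma radZ_apply (hs : 0 < s) (n : ℤ) (x : K p s) (hl : (n % (s : ℤ)).toNat < s) :
    radZ p s bas n x
      = ZMod.toCircle (bas.repr (x.coeff (n / (s : ℤ))) ⟨(n % (s : ℤ)).toNat, hl⟩) := by
  rw [radZ, dif_pos hs]
  rfl

private lemma radZ_block (hs : 0 < s) (k : ℤ) (l : Fin s) (x : K p s) :
    radZ p s bas (k * (s : ℤ) + (l : ℤ)) x = ZMod.toCircle (bas.repr (x.coeff k) l) := by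
  obtain ⟨hd, hm⟩ := blockDiv s hs k l
  have hl : ((k * (s : ℤ) + (l : ℤ)) % (s : ℤ)).toNat < s := by
    rw [hm]; simpa using l.isLt
  have h2 : (⟨((k * (s : ℤ) + (l : ℤ)) % (s : ℤ)).toNat, hl⟩ : Fin s) = l := by
    ext; simp [hm]
  rw [radZ_apply p s bas hs _ x hl, hd, h2]

private lemma prod_Ico_block (hs : 0 < s) (f : ℤ → Circle) (k : ℤ) :
    ∏ n ∈ Finset.Ico (k * (s : ℤ)) (k * (s : ℤ) + (s : ℤ)), f n
      = ∏ l : Fin s, f (k * (s : ℤ) + (l : ℤ)) := by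
  refine (Finset.prod_bij' (fun (l : Fin s) _ => k * (s : ℤ) + (l : ℤ))
      (fun n hn => (⟨(n - k * (s : ℤ)).toNat, ?_⟩ : Fin s)) ?_ ?_ ?_ ?_ ?_).symm
  · rw [Finset.mem_Ico] at hn
    generalize hc : k * (s : ℤ) = c at hn
    omega
  · intro l _
    rw [Finset.mem_Ico]
    have hl0 : (0 : ℤ) ≤ (l : ℤ) := Int.ofNat_nonneg _
    have hls : ((l : ℕ) : ℤ) < (s : ℤ) := by exact_mod_cast l.isLt
    refine ⟨?_, ?_⟩
    · show k * (s : ℤ) ≤ k * (s : ℤ) + (l : ℤ)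
      linarith
    · show k * (s : ℤ) + (l : ℤ) < k * (s : ℤ) + (s : ℤ)
      linarith
  · intro n _
    exact Finset.mem_univ _
  · intro l _
    ext
    show (k * (s : ℤ) + (l : ℤ) - k * (s : ℤ)).toNat = (l : ℕ)
    generalize k * (s : ℤ) = c
    omega
  · intro n hn
    rw [Finset.mem_Ico] at hn
    show k * (s : ℤ) + (((n - k * (s : ℤ)).toNat : ℕ) : ℤ) = n
    generalize hc : k * (s : ℤ) = c at hn ⊢
    omega
  · intro l _
    rfl

private lemma block_eval (hs : 0 < s) (β : ℤ → ZMod p) (x : K p s) (k : ℤ) :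
    ∏ n ∈ Finset.Ico (k * (s : ℤ)) (k * (s : ℤ) + (s : ℤ)), (radZ p s bas n x) ^ (β n).val
      = ZMod.toCircle (∑ l : Fin s, β (k * (s : ℤ) + (l : ℤ)) * bas.repr (x.coeff k) l) := by
  rw [prod_Ico_block s hs _ k, addChar_sum]
  refine Finset.prod_congr rfl fun l _ => ?_
  rw [radZ_block p s bas hs k l x, ← AddChar.map_nsmul_eq_pow, nsmul_eq_mul]
  congr 1
  rw [ZMod.natCast_rightInverse _]

private lemma Ico_mul_biUnion (hs : 0 < s) (a b : ℤ) :
    Finset.Ico (a * (s : ℤ)) (b * (s : ℤ))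
      = (Finset.Ico a b).biUnion
          (fun k => Finset.Ico (k * (s : ℤ)) (k * (s : ℤ) + (s : ℤ))) := by
  have hs' : (0 : ℤ) < (s : ℤ) := by exact_mod_cast hs
  ext n
  simp only [Finset.mem_Ico, Finset.mem_biUnion]
  constructor
  · rintro ⟨h1, h2⟩
    refine ⟨n / (s : ℤ), ⟨(Int.le_ediv_iff_mul_le hs').mpr h1,
      (Int.ediv_lt_iff_lt_mul hs').mpr h2⟩,
      (Int.le_ediv_iff_mul_le hs').mp le_rfl, ?_⟩
    have h3 : n < (n / (s : ℤ) + 1) * (s : ℤ) :=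
      (Int.ediv_lt_iff_lt_mul hs').mp (lt_add_one _)
    rw [add_one_mul] at h3
    exact h3
  · rintro ⟨k, ⟨hak, hkb⟩, h1, h2⟩
    constructor
    · calc a * (s : ℤ) ≤ k * (s : ℤ) := mul_le_mul_of_nonneg_right hak hs'.le
        _ ≤ n := h1
    · calc n < k * (s : ℤ) + (s : ℤ) := h2
        _ = (k + 1) * (s : ℤ) := by ring
        _ ≤ b * (s : ℤ) := mul_le_mul_of_nonneg_right (by omega) hs'.le

private lemma block_disj (hs' : (0 : ℤ) < (s : ℤ)) {k k' : ℤ} (h : k ≠ k') :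
    Disjoint (Finset.Ico (k * (s : ℤ)) (k * (s : ℤ) + (s : ℤ)))
      (Finset.Ico (k' * (s : ℤ)) (k' * (s : ℤ) + (s : ℤ))) := by
  rw [Finset.disjoint_left]
  intro n hn hn'
  rw [Finset.mem_Ico] at hn hn'
  rcases lt_or_gt_of_ne h with hlt | hlt
  · have h1 : (k + 1) * (s : ℤ) ≤ k' * (s : ℤ) :=
      mul_le_mul_of_nonneg_right (by omega) hs'.le
    rw [add_one_mul] at h1
    linarith [hn.2, hn'.1]
  · have h1 : (k' + 1) * (s : ℤ) ≤ k * (s : ℤ) :=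
      mul_le_mul_of_nonneg_right (by omega) hs'.le
    rw [add_one_mul] at h1
    linarith [hn'.2, hn.1]

private lemma finprod_radZ (hs : 0 < s) (β : ℤ → ZMod p) (x : K p s) (a b : ℤ)
    (hx : ∀ m : ℤ, m < a → x.coeff m = 0) (hβ : ∀ n : ℤ, b * (s : ℤ) ≤ n → β n = 0) :
    (∏ᶠ n : ℤ, (radZ p s bas n x) ^ (β n).val)
      = ∏ k ∈ Finset.Ico a b,
          ZMod.toCircle (∑ l : Fin s, β (k * (s : ℤ) + (l : ℤ)) * bas.repr (x.coeff k) l) := by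
  have hs' : (0 : ℤ) < (s : ℤ) := by exact_mod_cast hs
  have hsupp : (Function.mulSupport fun n : ℤ => (radZ p s bas n x) ^ (β n).val)
      ⊆ ↑(Finset.Ico (a * (s : ℤ)) (b * (s : ℤ))) := by
    intro n hn
    simp only [Finset.coe_Ico, Set.mem_Ico]
    constructor
    · by_contra hcon
      push_neg at hcon
      apply hn
      show (radZ p s bas n x) ^ (β n).val = 1
      have hd : n / (s : ℤ) < a := (Int.ediv_lt_iff_lt_mul hs').mpr hcon
      have hl : (n % (s : ℤ)).toNat < s := by
        have h1 := Int.emod_nonneg n hs'.ne'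
        have h2 := Int.emod_lt_of_pos n hs'
        omega
      rw [radZ_apply p s bas hs n x hl, hx _ hd]
      simp [AddChar.map_zero_eq_one]
    · by_contra hcon
      push_neg at hcon
      apply hn
      show (radZ p s bas n x) ^ (β n).val = 1
      rw [hβ n hcon]
      simp
  rw [finprod_eq_prod_of_mulSupport_subset _ hsupp, Ico_mul_biUnion s hs a b,
    Finset.prod_biUnion (fun k _ k' _ hne => block_disj s hs' hne)]
  exact Finset.prod_congr rfl fun k _ => block_eval p s bas hs β x k

private lemma char_eq_prod (χ : X p s) (N : ℤ) (hN : χ ∈ ann p s N) (x : K p s)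
    (a : ℤ) (haN : a ≤ N) (hx : ∀ m : ℤ, m < a → x.coeff m = 0) :
    χ x = ∏ k ∈ Finset.Ico a N, χ (HahnSeries.single k (x.coeff k)) := by
  set y : K p s := ∑ k ∈ Finset.Ico a N, HahnSeries.single k (x.coeff k) with hy
  have hycoeff : ∀ m : ℤ, y.coeff m = ∑ k ∈ Finset.Ico a N,
      (HahnSeries.single k (x.coeff k) : K p s).coeff m := by
    intro m
    exact map_sum (HahnSeries.coeff.addMonoidHom m) _ _
  have hx2 : x - y ∈ ball p s N := by
    intro m hm
    rw [HahnSeries.coeff_sub, hycoeff m]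
    by_cases hma : a ≤ m
    · rw [Finset.sum_eq_single m]
      · rw [HahnSeries.coeff_single_same, sub_self]
      · intro k _ hkm
        exact HahnSeries.coeff_single_of_ne (Ne.symm hkm)
      · intro hmem
        exact absurd (Finset.mem_Ico.mpr ⟨hma, hm⟩) hmem
    · push_neg at hma
      rw [hx m hma, Finset.sum_eq_zero, sub_self]
      intro k hk
      rw [Finset.mem_Ico] at hk
      exact HahnSeries.coeff_single_of_ne (by omega)
  calc χ x = χ (y + (x - y)) := by rw [add_sub_cancel]
    _ = χ y * χ (x - y) := AddChar.map_add_eq_mul χ _ _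
    _ = χ y := by rw [hN _ hx2, mul_one]
    _ = ∏ k ∈ Finset.Ico a N, χ (HahnSeries.single k (x.coeff k)) := addChar_sum χ _ _

end Statement1Aux

/-- Every continuous character `χ ∈ X` has a unique representation
`χ = ∏_{n=-∞}^{∞} r_n^{α_n}` with `α_n ∈ {0,…,p-1}` and only finitely many nonzero
exponents with positive index. -/
theorem statement1 (p s : ℕ) [Fact p.Prime] (hs : 0 < s)
    (bas : Module.Basis (Fin s) (ZMod p) (GF p s)) (χ : X p s) (hχ : ContinuousChar p s χ) :
    ∃! α : ℤ → ZMod p,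
      {n : ℤ | 0 < n ∧ α n ≠ 0}.Finite ∧
        ∀ x : K p s, χ x = ∏ᶠ n : ℤ, (radZ p s bas n x) ^ (α n).val := by
  classical
  obtain ⟨N, hN⟩ := hχ
  have hs' : (0 : ℤ) < (s : ℤ) := by exact_mod_cast hs
  have hlp : ∀ n : ℤ, (n % (s : ℤ)).toNat < s := by
    intro n
    have h1 := Int.emod_nonneg n hs'.ne'
    have h2 := Int.emod_lt_of_pos n hs'
    omega
  set α : ℤ → ZMod p := fun n =>
    coefHom p s χ (n / (s : ℤ)) (bas ⟨(n % (s : ℤ)).toNat, hlp n⟩) with hα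
  have halpha : ∀ (k : ℤ) (l : Fin s),
      α (k * (s : ℤ) + (l : ℤ)) = coefHom p s χ k (bas l) := by
    intro k l
    obtain ⟨hd, hm⟩ := blockDiv s hs k l
    have h2 : (⟨((k * (s : ℤ) + (l : ℤ)) % (s : ℤ)).toNat, hlp _⟩ : Fin s) = l := by
      ext; simp [hm]
    simp only [hα]
    rw [hd, h2]
  have hco : ∀ k : ℤ, N ≤ k → ∀ a0 : GF p s, coefHom p s χ k a0 = 0 := by
    intro k hk a0
    apply ZMod.injective_toCircle
    show ZMod.toCircle (coefFun p s χ k a0) = ZMod.toCircle 0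
    rw [coefFun_spec p s χ k a0, AddChar.map_zero_eq_one]
    apply hN
    intro m hm
    exact HahnSeries.coeff_single_of_ne (by omega)
  have hαzero : ∀ n : ℤ, N * (s : ℤ) ≤ n → α n = 0 := by
    intro n hn
    simp only [hα]
    exact hco _ ((Int.le_ediv_iff_mul_le hs').mpr hn) _
  have hfin : {n : ℤ | 0 < n ∧ α n ≠ 0}.Finite := by
    apply (Set.finite_Icc 1 (N * (s : ℤ))).subset
    rintro n ⟨hn0, hne⟩
    rw [Set.mem_Icc]
    refine ⟨by omega, ?_⟩
    by_contra h
    push_neg at h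
    exact hne (hαzero n h.le)
  have heq : ∀ x : K p s, χ x = ∏ᶠ n : ℤ, (radZ p s bas n x) ^ (α n).val := by
    intro x
    set a : ℤ := if x = 0 then N else min x.order N with ha
    have haN : a ≤ N := by
      rw [ha]
      split
      · exact le_refl N
      · exact min_le_right _ _
    have hxa : ∀ m : ℤ, m < a → x.coeff m = 0 := by
      intro m hm
      by_cases h0 : x = 0
      · simp [h0]
      · rw [ha, if_neg h0] at hm
        exact HahnSeries.coeff_eq_zero_of_lt_order (lt_of_lt_of_le hm (min_le_left _ _))
    rw [finprod_radZ p s bas hs α x a N hxa hαzero, char_eq_prod p s χ N hN x a haN hxa]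
    refine Finset.prod_congr rfl fun k _ => ?_
    rw [← coefFun_spec p s χ k (x.coeff k)]
    congr 1
    show coefHom p s χ k (x.coeff k) = _
    rw [coefHom_eq_sum p s bas χ k (x.coeff k)]
    exact Finset.sum_congr rfl fun l _ => by rw [halpha k l, mul_comm]
  have key : ∀ γ : ℤ → ZMod p, {n : ℤ | 0 < n ∧ γ n ≠ 0}.Finite →
      (∀ x : K p s, χ x = ∏ᶠ n : ℤ, (radZ p s bas n x) ^ (γ n).val) →
      ∀ (k : ℤ) (l : Fin s), ZMod.toCircle (γ (k * (s : ℤ) + (l : ℤ)))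
        = χ (HahnSeries.single k (bas l)) := by
    intro γ hfinγ heqγ k l
    obtain ⟨u, hu⟩ := hfinγ.bddAbove
    set b : ℤ := |u| + |k| + 1 with hb
    have hub : u < b := by
      have h1 := le_abs_self u
      have h2 := abs_nonneg k
      linarith
    have hkb : k < b := by
      have h1 := le_abs_self k
      have h2 := abs_nonneg u
      linarith
    have hb1 : (1 : ℤ) ≤ b := by
      have h1 := abs_nonneg u
      have h2 := abs_nonneg k
      linarith
    have hγb : ∀ n : ℤ, b * (s : ℤ) ≤ n → γ n = 0 := by
      intro n hn
      by_contra hne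
      have hbs : b ≤ b * (s : ℤ) := by
        calc b = b * 1 := (mul_one b).symm
          _ ≤ b * (s : ℤ) := mul_le_mul_of_nonneg_left hs' (by linarith)
      have h0 : 0 < n := by linarith
      have hle : n ≤ u := hu (⟨h0, hne⟩ : n ∈ {n : ℤ | 0 < n ∧ γ n ≠ 0})
      linarith
    have hxa : ∀ m : ℤ, m < min k b → (HahnSeries.single k (bas l) : K p s).coeff m = 0 := by
      intro m hm
      have hmk : m < k := lt_of_lt_of_le hm (min_le_left _ _)
      exact HahnSeries.coeff_single_of_ne (ne_of_lt hmk)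
    have heqx := heqγ (HahnSeries.single k (bas l))
    rw [finprod_radZ p s bas hs γ _ (min k b) b hxa hγb,
      Finset.prod_eq_single_of_mem k (Finset.mem_Ico.mpr ⟨min_le_left _ _, hkb⟩)] at heqx
    · rw [heqx]
      congr 1
      rw [Finset.sum_eq_single l]
      · rw [HahnSeries.coeff_single_same, Module.Basis.repr_self, Finsupp.single_eq_same, mul_one]
      · intro l' _ hne
        rw [HahnSeries.coeff_single_same, Module.Basis.repr_self,
          Finsupp.single_eq_of_ne hne, mul_zero]
      · intro h
        exact absurd (Finset.mem_univ l) h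
    · intro k' _ hne
      have hc : (HahnSeries.single k (bas l) : K p s).coeff k' = 0 :=
        HahnSeries.coeff_single_of_ne hne
      rw [hc]
      simp [AddChar.map_zero_eq_one]
  refine ⟨α, ⟨hfin, heq⟩, ?_⟩
  intro γ hγ
  obtain ⟨hγfin, hγeq⟩ := hγ
  funext n
  have hmod := hlp n
  set l : Fin s := ⟨(n % (s : ℤ)).toNat, hmod⟩ with hl
  have hn : n / (s : ℤ) * (s : ℤ) + (l : ℤ) = n := by
    have h1 : ((l : ℕ) : ℤ) = n % (s : ℤ) := by
      show ((n % (s : ℤ)).toNat : ℤ) = n % (s : ℤ)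
      exact Int.toNat_of_nonneg (Int.emod_nonneg n hs'.ne')
    rw [h1, mul_comm (n / (s : ℤ)) ((s : ℕ) : ℤ)]
    exact Int.mul_ediv_add_emod n (s : ℤ)
  have h1 := key γ hγfin hγeq (n / (s : ℤ)) l
  have h2 := key α hfin heq (n / (s : ℤ)) l
  rw [hn] at h1 h2
  exact ZMod.injective_toCircle (h1.trans h2.symm)


end LocalFieldMRA

end
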